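/- Boundary Hölder estimate: let M_a be of class 𝒜̄, let Ω ⊂ ℝⁿ be a bounded open set satisfying the uniform exterior sphere condition with radius R > 0, let f be continuous and bounded in Ω, and let u ∈ C(Ω̄) be a viscosity solution of M_a(D²u) = f in Ω with u = g on ∂Ω, where g ∈ C^β(∂Ω) and β ∈ (0,1]. Then sup over x ∈ Ω and y ∈ ∂Ω of (u(x) − u(y))/|x − y|^{β/2} is at most C ( [g]_{β,∂Ω} + ‖f⁻‖_{L^∞(Ω)} ), where C > 0 depends only on n, ã = (a_1+…+a_n)/n, R and β. -/

import Mathlib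

open Set Metric MeasureTheory Filter

noncomputable section

/-- Euclidean `n`-space `ℝⁿ`. -/
abbrev En (n : ℕ) : Type := EuclideanSpace ℝ (Fin n)

/-- The eigenvalues of a (symmetric) matrix, arranged in nondecreasing order. -/
noncomputable def sortedEig {n : ℕ} (X : Matrix (Fin n) (Fin n) ℝ) : Fin n → ℝ :=
  if hX : X.IsHermitian then fun i => hX.eigenvalues (Tuple.sort hX.eigenvalues i) else 0

/-- The weighted partial trace operator `M_a(X) = Σ a_i λ_i(X)`. -/
noncomputable def Ma {n : ℕ} (a : Fin n → ℝ) (X : Matrix (Fin n) (Fin n) ℝ) : ℝ :=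
  ∑ i, a i * sortedEig X i

/-- The last index of `Fin n`. -/
def lastIdx (n : ℕ) [NeZero n] : Fin n :=
  ⟨n - 1, Nat.sub_lt (Nat.pos_of_ne_zero (NeZero.ne n)) Nat.one_pos⟩

/-- The class 𝒜̄ : all weights nonnegative, some weight positive. -/
def ClassAbar {n : ℕ} (a : Fin n → ℝ) : Prop := (∀ i, 0 ≤ a i) ∧ ∃ i, 0 < a i

/-- The class 𝒜 : nonnegative weights with `a 1 > 0` and `a n > 0`. -/
def ClassA {n : ℕ} [NeZero n] (a : Fin n → ℝ) : Prop :=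
  (∀ i, 0 ≤ a i) ∧ 0 < a 0 ∧ 0 < a (lastIdx n)

/-- The class 𝒜₁ : nonnegative weights with `a 1 > 0`. -/
def ClassA1 {n : ℕ} [NeZero n] (a : Fin n → ℝ) : Prop := (∀ i, 0 ≤ a i) ∧ 0 < a 0

/-- The class 𝒜ₙ : nonnegative weights with `a n > 0`. -/
def ClassAn {n : ℕ} [NeZero n] (a : Fin n → ℝ) : Prop :=
  (∀ i, 0 ≤ a i) ∧ 0 < a (lastIdx n)

/-- `a* = min (a 1) (a n)`. -/
noncomputable def aStar {n : ℕ} [NeZero n] (a : Fin n → ℝ) : ℝ := min (a 0) (a (lastIdx n))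

/-- `â_j = (a 1 + ⋯ + a n) - a j`. -/
noncomputable def hatA {n : ℕ} (a : Fin n → ℝ) (j : Fin n) : ℝ := (∑ i, a i) - a j

/-- The Hessian matrix of `φ` at `x`. -/
noncomputable def hess {n : ℕ} (φ : En n → ℝ) (x : En n) : Matrix (Fin n) (Fin n) ℝ :=
  fun i j => iteratedFDeriv ℝ 2 φ x ![EuclideanSpace.single i 1, EuclideanSpace.single j 1]

/-- The Hessian matrix of `φ` at `x`, with derivatives taken within `Ω`. -/
noncomputable def hessOn {n : ℕ} (Ω : Set (En n)) (φ : En n → ℝ) (x : En n) :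
    Matrix (Fin n) (Fin n) ℝ :=
  fun i j =>
    iteratedFDerivWithin ℝ 2 φ Ω x ![EuclideanSpace.single i 1, EuclideanSpace.single j 1]

/-- `u` is a viscosity subsolution of `M_a(D²u) = f` in `Ω`. -/
def IsViscSubsol {n : ℕ} (a : Fin n → ℝ) (Ω : Set (En n)) (f u : En n → ℝ) : Prop :=
  ∀ x₀ ∈ Ω, ∀ φ : En n → ℝ, ContDiff ℝ 2 φ →
    IsLocalMaxOn (fun x => u x - φ x) Ω x₀ → f x₀ ≤ Ma a (hess φ x₀)

/-- `u` is a viscosity supersolution of `M_a(D²u) = f` in `Ω`. -/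
def IsViscSupersol {n : ℕ} (a : Fin n → ℝ) (Ω : Set (En n)) (f u : En n → ℝ) : Prop :=
  ∀ x₀ ∈ Ω, ∀ φ : En n → ℝ, ContDiff ℝ 2 φ →
    IsLocalMinOn (fun x => u x - φ x) Ω x₀ → Ma a (hess φ x₀) ≤ f x₀

/-- `u` is a (continuous) viscosity solution of `M_a(D²u) = f` in `Ω`. -/
def IsViscSolution {n : ℕ} (a : Fin n → ℝ) (Ω : Set (En n)) (f u : En n → ℝ) : Prop :=
  ContinuousOn u Ω ∧ IsViscSubsol a Ω f u ∧ IsViscSupersol a Ω f u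

/-- The `L^p` norm of `f` on `D`. -/
noncomputable def lpNormOn {n : ℕ} (p : ℝ) (D : Set (En n)) (f : En n → ℝ) : ℝ :=
  (∫ x in D, |f x| ^ p) ^ (1 / p)

/-- The sup norm of `f` on `D`. -/
noncomputable def supAbsOn {n : ℕ} (D : Set (En n)) (f : En n → ℝ) : ℝ :=
  sSup ((fun x => |f x|) '' D)

/-- The Hölder seminorm `[h]_{β,D}`. -/
noncomputable def holderSemi {n : ℕ} (β : ℝ) (D : Set (En n)) (h : En n → ℝ) : ℝ :=
  sSup {r | ∃ x ∈ D, ∃ y ∈ D, x ≠ y ∧ r = |h x - h y| / ‖x - y‖ ^ β}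

/-- The Hölder norm `‖g‖_{C^β(D)} = sup_D |g| + [g]_{β,D}`. -/
noncomputable def cBetaNorm {n : ℕ} (β : ℝ) (D : Set (En n)) (g : En n → ℝ) : ℝ :=
  supAbsOn D g + holderSemi β D g

/-- `g` is `β`-Hölder continuous on `D`. -/
def HolderOn {n : ℕ} (β : ℝ) (D : Set (En n)) (g : En n → ℝ) : Prop :=
  ∃ K : ℝ, ∀ x ∈ D, ∀ y ∈ D, |g x - g y| ≤ K * ‖x - y‖ ^ β

/-- The `C^{1,β}(D)` norm: `sup|g| + sup|Dg| + [Dg]_{β,D}`. -/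
noncomputable def c1BetaNorm {n : ℕ} (β : ℝ) (D : Set (En n)) (g : En n → ℝ) : ℝ :=
  supAbsOn D g + sSup ((fun x => ‖fderiv ℝ g x‖) '' D) +
    sSup {r | ∃ x ∈ D, ∃ y ∈ D, x ≠ y ∧ r = ‖fderiv ℝ g x - fderiv ℝ g y‖ / ‖x - y‖ ^ β}

/-- `g ∈ C^{1,β}(D)`: differentiable with `β`-Hölder derivative on `D`. -/
def C1HolderOn {n : ℕ} (β : ℝ) (D : Set (En n)) (g : En n → ℝ) : Prop :=
  ContDiff ℝ 1 g ∧ ∃ K : ℝ, ∀ x ∈ D, ∀ y ∈ D,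
    ‖fderiv ℝ g x - fderiv ℝ g y‖ ≤ K * ‖x - y‖ ^ β

/-- Uniform exterior sphere condition with radius `R`: every boundary point lies on the
boundary of a closed ball of radius `R` containing `Ω̄`. -/
def ExtSphere {n : ℕ} (Ω : Set (En n)) (R : ℝ) : Prop :=
  ∀ y ∈ frontier Ω, ∃ z : En n, dist y z = R ∧ closure Ω ⊆ closedBall z R

/-- The cone `Σ_θ = {x : xₙ ≥ |x| cos θ}`. -/
def coneSet (n : ℕ) [NeZero n] (θ : ℝ) : Set (En n) := {x | ‖x‖ * Real.cos θ ≤ x (lastIdx n)}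

/-- Uniform exterior cone condition. -/
def ExtCone {n : ℕ} [NeZero n] (Ω : Set (En n)) : Prop :=
  ∃ θ₀ ∈ Set.Ioo (0 : ℝ) Real.pi, ∃ r₀ > (0 : ℝ), ∀ y ∈ frontier Ω,
    ∃ O : En n ≃ₗᵢ[ℝ] En n,
      closure Ω ∩ ball y r₀ ⊆ (fun x => y + O x) '' coneSet n θ₀

/-- Uniform Lipschitz boundary with Lipschitz constant `L`: near each boundary point, in
suitable rotated coordinates, `Ω` is the region above the graph of an `L`-Lipschitz
function. -/
def LipschitzBoundary {n : ℕ} [NeZero n] (Ω : Set (En n)) (L : ℝ) : Prop :=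
  ∃ r₀ > (0 : ℝ), ∀ y ∈ frontier Ω, ∃ O : En n ≃ₗᵢ[ℝ] En n, ∃ ψ : En n → ℝ,
    LipschitzWith (Real.toNNReal L) ψ ∧
    ∀ x ∈ ball (0 : En n) r₀,
      (y + O x ∈ Ω ↔ ψ (x - EuclideanSpace.single (lastIdx n) (x (lastIdx n))) < x (lastIdx n))

/-- The open cube of edge `ℓ` centered at the origin. -/
def cube (n : ℕ) (ℓ : ℝ) : Set (En n) := {x | ∀ i, |x i| < ℓ / 2}

/-- The upper concave envelope of `u` in `Ω`: the smallest concave function `≥ u` in `Ω`. -/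
noncomputable def upperEnvelope {n : ℕ} (Ω : Set (En n)) (u : En n → ℝ) : En n → ℝ :=
  fun x => sInf {t | ∃ φ : En n → ℝ, ConcaveOn ℝ Ω φ ∧ (∀ z ∈ Ω, u z ≤ φ z) ∧ t = φ x}

/-- The lower convex envelope of `u` in `Ω`: the largest convex function `≤ u` in `Ω`. -/
noncomputable def lowerEnvelope {n : ℕ} (Ω : Set (En n)) (u : En n → ℝ) : En n → ℝ :=
  fun x => sSup {t | ∃ φ : En n → ℝ, ConvexOn ℝ Ω φ ∧ (∀ z ∈ Ω, φ z ≤ u z) ∧ t = φ x}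

end


section AuxLemmas

local notation "⟪" x ", " y "⟫" => @inner ℝ _ _ x y

lemma Ma_smul_one {n : ℕ} (hn : 0 < n) (a : Fin n → ℝ) (c : ℝ) :
    Ma a (c • (1 : Matrix (Fin n) (Fin n) ℝ)) = (∑ i, a i) * c := by
  haveI : NeZero n := ⟨hn.ne'⟩
  have hX : (c • (1 : Matrix (Fin n) (Fin n) ℝ)).IsHermitian := by
    simp [Matrix.IsHermitian, Matrix.conjTranspose_smul]
  have heig : ∀ i, hX.eigenvalues i = c := by
    intro i
    have hmem := hX.eigenvalues_mem_spectrum_real i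
    have hsc : c • (1 : Matrix (Fin n) (Fin n) ℝ)
        = algebraMap ℝ (Matrix (Fin n) (Fin n) ℝ) c :=
      (Algebra.algebraMap_eq_smul_one c).symm
    have h' : spectrum ℝ (c • (1 : Matrix (Fin n) (Fin n) ℝ)) = {c} := by
      rw [hsc]; exact spectrum.scalar_eq c
    rw [h'] at hmem
    exact hmem
  unfold Ma sortedEig
  rw [dif_pos hX]
  simp only [heig]
  rw [← Finset.sum_mul]

lemma contDiff_quad {n : ℕ} (c : ℝ) (L : En n →L[ℝ] ℝ) (b : ℝ) :
    ContDiff ℝ 2 (fun x : En n => c + L x + b * ⟪x, x⟫) :=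
  (contDiff_const.add L.contDiff).add
    (contDiff_const.mul (contDiff_id.inner ℝ contDiff_id))

lemma hess_quad {n : ℕ} (c : ℝ) (L : En n →L[ℝ] ℝ) (b : ℝ) (x₀ : En n) :
    hess (fun x : En n => c + L x + b * ⟪x, x⟫) x₀
      = (2 * b) • (1 : Matrix (Fin n) (Fin n) ℝ) := by
  set T : En n →L[ℝ] (En n →L[ℝ] ℝ) := innerSL ℝ with hT
  have hder : ∀ x : En n,
      HasFDerivAt (fun x : En n => c + L x + b * ⟪x, x⟫) (L + ((2 * b) • T) x) x := by
    intro x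
    have h1 := (hasFDerivAt_id (𝕜 := ℝ) x).inner ℝ (hasFDerivAt_id x)
    have h2 := h1.const_mul b
    have h3 := (L.hasFDerivAt.const_add c).add h2
    refine h3.congr_fderiv ?_
    refine ContinuousLinearMap.ext fun y => ?_
    simp only [hT, ContinuousLinearMap.add_apply, ContinuousLinearMap.smul_apply,
      ContinuousLinearMap.comp_apply, ContinuousLinearMap.prod_apply,
      ContinuousLinearMap.coe_id', id_eq, fderivInnerCLM_apply, show ∀ v w : En n, innerSL ℝ v w = ⟪v, w⟫ from fun _ _ => rfl,
      smul_eq_mul]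
    rw [real_inner_comm y x]
    ring
  have hfd : (fderiv ℝ (fun x : En n => c + L x + b * ⟪x, x⟫))
      = fun x => L + ((2 * b) • T) x := funext fun x => (hder x).fderiv
  have h2nd : fderiv ℝ (fderiv ℝ (fun x : En n => c + L x + b * ⟪x, x⟫)) x₀
      = (2 * b) • T := by
    rw [hfd]
    exact ((((2 * b) • T).hasFDerivAt).const_add L).fderiv
  funext i j
  show iteratedFDeriv ℝ 2 _ x₀ ![EuclideanSpace.single i 1, EuclideanSpace.single j 1] = _
  rw [iteratedFDeriv_two_apply, h2nd]
  simp [hT, show ∀ v w : En n, innerSL ℝ v w = ⟪v, w⟫ from fun _ _ => rfl, Matrix.smul_apply, Matrix.one_apply, EuclideanSpace.inner_single_left,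
    EuclideanSpace.single_apply, mul_ite]

end AuxLemmas

set_option maxHeartbeats 1600000 in
/-- **Boundary Hölder estimate (Lemma 5.4 (i)).** Let `M_a ∈ 𝒜̄`, `Ω ⊆ ℝⁿ` bounded open
with the uniform exterior sphere condition of radius `R > 0`, `f` continuous and bounded,
and `u ∈ C(Ω̄)` a viscosity solution of `M_a(D²u) = f` with `u = g ∈ C^β(∂Ω)` on `∂Ω`,
`β ∈ (0,1]`. Then `sup_{x ∈ Ω, y ∈ ∂Ω} (u(x) − u(y))/|x−y|^{β/2} ≤
C ([g]_{β,∂Ω} + ‖f⁻‖_{L^∞(Ω)})`, with `C` depending only on `n, ã, R, β`. -/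
theorem boundary_holder (n : ℕ) (a : Fin n → ℝ) (ha : ClassAbar a)
    (Ω : Set (En n)) (hΩo : IsOpen Ω) (hΩb : Bornology.IsBounded Ω)
    (R : ℝ) (hR : 0 < R) (hS : ExtSphere Ω R)
    (β : ℝ) (hβ : β ∈ Set.Ioc (0 : ℝ) 1) :
    ∃ C : ℝ, 0 < C ∧
      ∀ f u g : En n → ℝ,
        ContinuousOn f Ω → (∃ K, ∀ x ∈ Ω, |f x| ≤ K) →
        ContinuousOn u (closure Ω) →
        IsViscSubsol a Ω f u → IsViscSupersol a Ω f u →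
        Set.EqOn u g (frontier Ω) →
        HolderOn β (frontier Ω) g →
        ∀ x ∈ Ω, ∀ y ∈ frontier Ω,
          u x - u y ≤
            C * (holderSemi β (frontier Ω) g + sSup ((fun z => max (-(f z)) 0) '' Ω)) *
              ‖x - y‖ ^ (β / 2) := by
  classical
  obtain ⟨hnonneg, j₀, hj₀⟩ := ha
  have hn : 0 < n := j₀.pos
  set S := ∑ i, a i with hSdef
  have hSpos : 0 < S := Finset.sum_pos' (fun i _ => hnonneg i) ⟨j₀, Finset.mem_univ _, hj₀⟩
  set γ := β / 2 with hγdef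
  have hβ0 : 0 < β := hβ.1
  have hβ1 : β ≤ 1 := hβ.2
  have hγpos : 0 < γ := by positivity
  have hγle : γ ≤ 1 / 2 := by rw [hγdef]; linarith
  have h2R : (0 : ℝ) < 2 * R := by linarith
  set c₁ := 2 * (2 * R) ^ γ with hc₁def
  set c₂ := R * (2 * R) ^ (1 - γ) / S with hc₂def
  have hc₁pos : 0 < c₁ := by
    have := Real.rpow_pos_of_pos h2R γ; positivity
  have hc₂pos : 0 < c₂ := by
    have := Real.rpow_pos_of_pos h2R (1 - γ); positivity
  refine ⟨c₁ + c₂, by positivity, ?_⟩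
  intro f u g hf hfb hu hsub hsup hbg hgH x hx y₀ hy₀
  set H := holderSemi β (frontier Ω) g with hHdef
  set F := sSup ((fun z => max (-(f z)) 0) '' Ω) with hFdef
  obtain ⟨z, hzd, hzball⟩ := hS y₀ hy₀
  have hxcl : x ∈ closure Ω := subset_closure hx
  have hy₀cl : y₀ ∈ closure Ω := frontier_subset_closure hy₀
  have hy₀notΩ : y₀ ∉ Ω := by
    rw [hΩo.frontier_eq] at hy₀; exact hy₀.2
  set δ := ‖x - y₀‖ with hδdef
  have hδpos : 0 < δ := by
    rw [hδdef, norm_pos_iff, sub_ne_zero]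
    rintro rfl; exact hy₀notΩ hx
  have hdist : ∀ p ∈ closure Ω, ‖p - z‖ ≤ R := by
    intro p hp
    have := hzball hp
    rwa [Metric.mem_closedBall, dist_eq_norm] at this
  have hR' : ‖y₀ - z‖ = R := by rw [← dist_eq_norm]; exact hzd
  have hδ2R : δ ≤ 2 * R := by
    have h1 : x - y₀ = (x - z) - (y₀ - z) := by abel
    calc δ = ‖(x - z) - (y₀ - z)‖ := by rw [hδdef, h1]
    _ ≤ ‖x - z‖ + ‖y₀ - z‖ := norm_sub_le _ _
    _ ≤ 2 * R := by have := hdist x hxcl; rw [hR']; linarith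
  set ν : En n := (R⁻¹ : ℝ) • (y₀ - z) with hνdef
  set ℓ : En n → ℝ := fun p => @inner ℝ _ _ ν (y₀ - p) with hℓdef
  have hℓkey : ∀ p ∈ closure Ω, ‖p - y₀‖ ^ 2 ≤ 2 * R * ℓ p := by
    intro p hp
    have h1 : 2 * R * ℓ p = 2 * @inner ℝ _ _ (y₀ - z) (y₀ - p) := by
      rw [hℓdef]
      simp only [hνdef, real_inner_smul_left]
      field_simp
    have hab : y₀ - p = (y₀ - z) - (p - z) := by abel
    have h2 : ‖(y₀ - z) - (p - z)‖ ^ 2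
        = ‖y₀ - z‖ ^ 2 - 2 * @inner ℝ _ _ (y₀ - z) (p - z) + ‖p - z‖ ^ 2 :=
      norm_sub_sq_real _ _
    have h3 : @inner ℝ _ _ (y₀ - z) (y₀ - p)
        = ‖y₀ - z‖ ^ 2 - @inner ℝ _ _ (y₀ - z) (p - z) := by
      rw [hab, inner_sub_right, real_inner_self_eq_norm_sq]
    have h4 : ‖p - z‖ ≤ ‖y₀ - z‖ := by rw [hR']; exact hdist p hp
    have h5 : ‖p - z‖ ^ 2 ≤ ‖y₀ - z‖ ^ 2 :=
      pow_le_pow_left₀ (norm_nonneg _) h4 2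
    have h6 : ‖p - y₀‖ = ‖(y₀ - z) - (p - z)‖ := by rw [← hab, norm_sub_rev]
    rw [h1, h3, h6, h2]
    linarith
  have hℓnn : ∀ p ∈ closure Ω, 0 ≤ ℓ p := by
    intro p hp
    nlinarith [hℓkey p hp, sq_nonneg ‖p - y₀‖, hR]
  have hνnorm : ‖ν‖ = 1 := by
    rw [hνdef, norm_smul, hR', Real.norm_eq_abs, abs_inv, abs_of_pos hR]
    exact inv_mul_cancel₀ hR.ne'
  have hℓle : ∀ p : En n, ℓ p ≤ ‖p - y₀‖ := by
    intro p
    calc ℓ p ≤ ‖ν‖ * ‖y₀ - p‖ := real_inner_le_norm _ _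
    _ = ‖p - y₀‖ := by rw [hνnorm, one_mul, norm_sub_rev]
  -- facts about H
  have hHnn : 0 ≤ H :=
    Real.sSup_nonneg (by
      rintro r ⟨p, hp, q, hq, hpq, rfl⟩
      have : (0:ℝ) < ‖p - q‖ ^ β :=
        Real.rpow_pos_of_pos (norm_pos_iff.mpr (sub_ne_zero.mpr hpq)) β
      positivity)
  have hHb : ∀ p ∈ frontier Ω, g p - g y₀ ≤ H * ‖p - y₀‖ ^ β := by
    intro p hp
    by_cases hpy : p = y₀
    · subst hpy
      simp [Real.zero_rpow hβ0.ne']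
    · obtain ⟨K, hK⟩ := hgH
      have hpow : (0:ℝ) < ‖p - y₀‖ ^ β :=
        Real.rpow_pos_of_pos (norm_pos_iff.mpr (sub_ne_zero.mpr hpy)) β
      have hbdd : BddAbove {r | ∃ x ∈ frontier Ω, ∃ y ∈ frontier Ω,
          x ≠ y ∧ r = |g x - g y| / ‖x - y‖ ^ β} := by
        refine ⟨K, ?_⟩
        rintro r ⟨p', hp', q', hq', hne, rfl⟩
        have hpow' : (0:ℝ) < ‖p' - q'‖ ^ β :=
          Real.rpow_pos_of_pos (norm_pos_iff.mpr (sub_ne_zero.mpr hne)) β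
        exact (div_le_iff₀ hpow').mpr (hK p' hp' q' hq')
      have hmem : |g p - g y₀| / ‖p - y₀‖ ^ β ∈ {r | ∃ x ∈ frontier Ω, ∃ y ∈ frontier Ω,
          x ≠ y ∧ r = |g x - g y| / ‖x - y‖ ^ β} := ⟨p, hp, y₀, hy₀, hpy, rfl⟩
      have hle := le_csSup hbdd hmem
      calc g p - g y₀ ≤ |g p - g y₀| := le_abs_self _
      _ ≤ H * ‖p - y₀‖ ^ β := by
          rw [hHdef]; unfold holderSemi
          exact (div_le_iff₀ hpow).mp hle
  -- facts about F
  have hFnn : 0 ≤ F :=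
    Real.sSup_nonneg (by rintro r ⟨p, hp, rfl⟩; exact le_max_right _ _)
  obtain ⟨K₀, hK₀⟩ := hfb
  have hFbdd : BddAbove ((fun z => max (-(f z)) 0) '' Ω) := by
    refine ⟨K₀, ?_⟩
    rintro r ⟨q, hq, rfl⟩
    have h1 := hK₀ q hq
    have h2 : -(f q) ≤ |f q| := neg_le_abs _
    have h3 : (0:ℝ) ≤ |f q| := abs_nonneg _
    exact max_le (by linarith) (by linarith)
  have hFb : ∀ p ∈ Ω, -F ≤ f p := by
    intro p hp
    have hmem := le_csSup hFbdd ⟨p, hp, rfl⟩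
    have : -(f p) ≤ F := le_trans (le_max_left _ _) hmem
    linarith
  -- rpow facts
  have hδγ : 0 < δ ^ γ := Real.rpow_pos_of_pos hδpos γ
  have hδδ : δ ^ (γ - 1) * δ = δ ^ γ := by
    rw [← Real.rpow_add_one hδpos.ne' (γ - 1)]
    norm_num
  have hconc : ∀ t : ℝ, 0 ≤ t → t ^ γ ≤ δ ^ (γ - 1) * t + δ ^ γ := by
    intro t ht
    rcases le_total t δ with h | h
    · have h1 : t ^ γ ≤ δ ^ γ := Real.rpow_le_rpow ht h hγpos.le
      have h0 : 0 ≤ δ ^ (γ - 1) * t :=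
        mul_nonneg (Real.rpow_nonneg hδpos.le _) ht
      linarith
    · have htpos : 0 < t := lt_of_lt_of_le hδpos h
      have h1 : t ^ γ = t ^ (γ - 1) * t := by
        rw [← Real.rpow_add_one htpos.ne' (γ - 1)]
        norm_num
      have h2 : t ^ (γ - 1) ≤ δ ^ (γ - 1) :=
        Real.rpow_le_rpow_of_nonpos hδpos h (by linarith)
      calc t ^ γ = t ^ (γ - 1) * t := h1
      _ ≤ δ ^ (γ - 1) * t := mul_le_mul_of_nonneg_right h2 ht
      _ ≤ δ ^ (γ - 1) * t + δ ^ γ := le_add_of_nonneg_right hδγ.le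
  have hβγ : ∀ t : ℝ, 0 ≤ t → (t ^ 2) ^ γ = t ^ β := by
    intro t ht
    rw [← Real.rpow_natCast t 2, ← Real.rpow_mul ht]
    norm_num [hγdef]
    ring_nf
  -- main estimate with parameter η
  have key : ∀ η : ℝ, 0 < η →
      u x - u y₀ ≤ c₁ * H * δ ^ γ + c₂ * (F + η) * δ ^ γ := by
    intro η hη
    set K := (F + η) / (2 * S) with hKdef
    have hKpos : 0 < K := by
      apply div_pos (by linarith) (by linarith)
    set A := H * (2 * R) ^ γ * δ ^ (γ - 1) with hAdef
    set B := H * (2 * R) ^ γ * δ ^ γ with hBdef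
    have h2Rγ : (0:ℝ) < (2 * R) ^ γ := Real.rpow_pos_of_pos h2R γ
    have hδγ1 : (0:ℝ) < δ ^ (γ - 1) := Real.rpow_pos_of_pos hδpos _
    have hAnn : 0 ≤ A := by positivity
    have hBnn : 0 ≤ B := by positivity
    set L : En n →L[ℝ] ℝ :=
      (-A) • ((innerSL ℝ : En n →L[ℝ] En n →L[ℝ] ℝ) ν)
        + (2 * K) • ((innerSL ℝ : En n →L[ℝ] En n →L[ℝ] ℝ) z) with hLdef
    set c₀ : ℝ := u y₀ + A * @inner ℝ _ _ ν y₀ + B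
        + K * (R ^ 2 - @inner ℝ _ _ z z) with hc₀def
    set w : En n → ℝ := fun x' => c₀ + L x' + (-K) * @inner ℝ _ _ x' x' with hwdef
    have hwgeom : ∀ x' : En n,
        w x' = u y₀ + A * ℓ x' + B + K * (R ^ 2 - ‖x' - z‖ ^ 2) := by
      intro x'
      have hzz : ‖x' - z‖ ^ 2 = @inner ℝ _ _ (x' - z) (x' - z) :=
        (real_inner_self_eq_norm_sq _).symm
      rw [hwdef]
      simp only [hc₀def, hLdef, hℓdef, ContinuousLinearMap.add_apply,
        ContinuousLinearMap.smul_apply,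
        show ∀ v w : En n, innerSL ℝ v w = @inner ℝ _ _ v w from fun _ _ => rfl, smul_eq_mul]
      rw [hzz]
      simp only [inner_sub_left, inner_sub_right]
      rw [real_inner_comm x' z]
      ring
    have hwc : ContDiff ℝ 2 w := contDiff_quad c₀ L (-K)
    have hMa : ∀ x' : En n, Ma a (hess w x') = -(F + η) := by
      intro x'
      rw [hwdef]
      rw [hess_quad c₀ L (-K) x', Ma_smul_one hn a (2 * -K), ← hSdef]
      rw [hKdef]
      field_simp
    -- comparison argument
    have hwcont : ContinuousOn (fun x' => u x' - w x') (closure Ω) :=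
      hu.sub hwc.continuous.continuousOn
    have hcpt : IsCompact (closure Ω) :=
      Metric.isCompact_of_isClosed_isBounded isClosed_closure hΩb.closure
    obtain ⟨x₀, hx₀cl, hmax⟩ := hcpt.exists_isMaxOn ⟨x, hxcl⟩ hwcont
    have hboundary : ∀ p ∈ frontier Ω, u p - w p ≤ 0 := by
      intro p hp
      have hpcl : p ∈ closure Ω := frontier_subset_closure hp
      have h1 : g p - g y₀ ≤ A * ℓ p + B := by
        have ht2 := hℓkey p hpcl
        have hbβ : ‖p - y₀‖ ^ β ≤ (2 * R * ℓ p) ^ γ := by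
          rw [← hβγ ‖p - y₀‖ (norm_nonneg _)]
          exact Real.rpow_le_rpow (sq_nonneg _) ht2 hγpos.le
        have hsplit : (2 * R * ℓ p) ^ γ = (2 * R) ^ γ * (ℓ p) ^ γ :=
          Real.mul_rpow h2R.le (hℓnn p hpcl)
        have hc := hconc (ℓ p) (hℓnn p hpcl)
        calc g p - g y₀ ≤ H * ‖p - y₀‖ ^ β := hHb p hp
        _ ≤ H * ((2 * R) ^ γ * (ℓ p) ^ γ) := by
            rw [← hsplit]; exact mul_le_mul_of_nonneg_left hbβ hHnn
        _ ≤ H * ((2 * R) ^ γ * (δ ^ (γ - 1) * ℓ p + δ ^ γ)) := by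
            apply mul_le_mul_of_nonneg_left _ hHnn
            exact mul_le_mul_of_nonneg_left hc h2Rγ.le
        _ = A * ℓ p + B := by rw [hAdef, hBdef]; ring
      have h2 : 0 ≤ K * (R ^ 2 - ‖p - z‖ ^ 2) := by
        have h4 := hdist p hpcl
        have h5 : ‖p - z‖ ^ 2 ≤ R ^ 2 :=
          pow_le_pow_left₀ (norm_nonneg _) h4 2
        have := hKpos.le
        nlinarith
      have hup : u p = g p := hbg hp
      have huy : u y₀ = g y₀ := hbg hy₀
      rw [hwgeom p, hup, huy]
      linarith
    have hux : u x ≤ w x := by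
      by_cases hx₀Ω : x₀ ∈ Ω
      · exfalso
        have hmaxΩ : IsMaxOn (fun x' => u x' - w x') Ω x₀ :=
          isMaxOn_iff.mpr fun p hp => isMaxOn_iff.mp hmax p (subset_closure hp)
        have hloc : IsLocalMaxOn (fun x' => u x' - w x') Ω x₀ := hmaxΩ.localize
        have hle := hsub x₀ hx₀Ω w hwc hloc
        rw [hMa x₀] at hle
        have hf₀ := hFb x₀ hx₀Ω
        linarith
      · have hpfr : x₀ ∈ frontier Ω := by
          rw [hΩo.frontier_eq]; exact ⟨hx₀cl, hx₀Ω⟩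
        have h1 : u x - w x ≤ u x₀ - w x₀ := isMaxOn_iff.mp hmax x hxcl
        have h2 := hboundary x₀ hpfr
        linarith
    -- final chain
    have htri : R ≤ δ + ‖x - z‖ := by
      have h2 : ‖y₀ - z‖ ≤ ‖y₀ - x‖ + ‖x - z‖ := by
        have h1 : y₀ - z = (y₀ - x) + (x - z) := by abel
        rw [h1]; exact norm_add_le _ _
      rw [hR', norm_sub_rev y₀ x] at h2
      rw [hδdef]
      linarith
    have hRr : R ^ 2 - ‖x - z‖ ^ 2 ≤ 2 * R * δ := by
      have h4 := hdist x hxcl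
      nlinarith [norm_nonneg (x - z), hδpos.le]
    have hδle : δ ≤ (2 * R) ^ (1 - γ) * δ ^ γ := by
      have h1 : δ = δ ^ γ * δ ^ (1 - γ) := by
        rw [← Real.rpow_add hδpos]
        norm_num
      have h2 : δ ^ (1 - γ) ≤ (2 * R) ^ (1 - γ) :=
        Real.rpow_le_rpow hδpos.le hδ2R (by linarith)
      calc δ = δ ^ γ * δ ^ (1 - γ) := h1
      _ ≤ δ ^ γ * (2 * R) ^ (1 - γ) := mul_le_mul_of_nonneg_left h2 hδγ.le
      _ = (2 * R) ^ (1 - γ) * δ ^ γ := by ring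
    calc u x - u y₀ ≤ w x - u y₀ := by linarith [hux]
    _ = A * ℓ x + B + K * (R ^ 2 - ‖x - z‖ ^ 2) := by rw [hwgeom x]; ring
    _ ≤ A * δ + B + K * (2 * R * δ) := by
        have e1 : A * ℓ x ≤ A * δ := mul_le_mul_of_nonneg_left (hℓle x) hAnn
        have e2 : K * (R ^ 2 - ‖x - z‖ ^ 2) ≤ K * (2 * R * δ) :=
          mul_le_mul_of_nonneg_left hRr hKpos.le
        linarith
    _ ≤ c₁ * H * δ ^ γ + K * (2 * R * ((2 * R) ^ (1 - γ) * δ ^ γ)) := by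
        have e1 : A * δ + B = c₁ * H * δ ^ γ := by
          rw [hAdef, hBdef, hc₁def]
          rw [mul_assoc (H * (2 * R) ^ γ), hδδ]
          ring
        have e2 : K * (2 * R * δ) ≤ K * (2 * R * ((2 * R) ^ (1 - γ) * δ ^ γ)) := by
          apply mul_le_mul_of_nonneg_left _ hKpos.le
          have := mul_le_mul_of_nonneg_left hδle h2R.le
          linarith
        linarith
    _ = c₁ * H * δ ^ γ + c₂ * (F + η) * δ ^ γ := by
        rw [hKdef, hc₂def]
        field_simp
  -- pass to the limit η → 0
  have hgoal : u x - u y₀ ≤ (c₁ + c₂) * (H + F) * δ ^ γ := by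
    apply le_of_forall_pos_le_add
    intro ε hε
    have hcd : 0 < c₂ * δ ^ γ := mul_pos hc₂pos hδγ
    have hη : 0 < ε / (c₂ * δ ^ γ) := div_pos hε hcd
    have hk := key _ hη
    have he : c₂ * (F + ε / (c₂ * δ ^ γ)) * δ ^ γ = c₂ * F * δ ^ γ + ε := by
      field_simp
    rw [he] at hk
    nlinarith [mul_nonneg (mul_nonneg hc₂pos.le hHnn) hδγ.le,
      mul_nonneg (mul_nonneg hc₁pos.le hFnn) hδγ.le]
  exact hgoal
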